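/- arXiv:1707.03575 — 2 statements merged into one kernel-verified Lean document; each statement's English description precedes it below -/
import Mathlib

section
/- Fix x* > 0 and t₁ > 0, and let u, v : [0,x*] → ℝ be continuous with t₁ ≤ τ*_v ≤ τ*_u.ue Then for every t ∈ [τ*_v, τ*_u], |Υ^u(t) − Υ^v(τ*_v)| ≤ A_u·(1/2)·(x*)²·M_{u,v}·‖u − v‖, where A_u = (x*/t₁)·exp(2‖u‖) and M_{u,v} = exp(max(‖u‖,‖v‖)). (Note Υ^v(τ*_v) = x*.) -/
open Set

noncomputable def Fu (xs : ℝ) (h : 0 ≤ xs) (u : C(Icc (0:ℝ) xs, ℝ)) (x : ℝ) : ℝ :=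
  ∫ z in (0:ℝ)..x, Real.exp (-(u (projIcc 0 xs h z)))

noncomputable def Wu (xs : ℝ) (h : 0 ≤ xs) (u : C(Icc (0:ℝ) xs, ℝ)) (x : ℝ) : ℝ :=
  ∫ ξ in (0:ℝ)..x, Fu xs h u ξ

noncomputable def tau (xs : ℝ) (h : 0 ≤ xs) (u : C(Icc (0:ℝ) xs, ℝ)) : ℝ :=
  Wu xs h u xs

/-!
Everything rests on `F_u` being increasing, i.e. `W_u` being convex with `W_u(0) = 0`.
With `y = Υ^u(t)`, convexity gives `t = W_u(y) ≤ y F_u(y)` and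
`(x* - y) F_u(y) ≤ W_u(x*) - W_u(y) = τ*_u - t ≤ τ*_u - τ*_v`, so
`t₁ (x* - y) ≤ x* (τ*_u - τ*_v)`. Finally
`τ*_u - τ*_v ≤ (x*)²/2 · e^{‖u‖} ‖u - v‖`, because `e^{-u} - e^{-v} ≤ e^{-u} (v - u)` pointwise.
-/

open Real MeasureTheory intervalIntegral

theorem Real.exp_sub_exp_le_exp_mul_sub (x y : ℝ) : exp x - exp y ≤ exp x * (x - y) := by
  have h := add_one_le_exp (y - x)
  have hy : exp y = exp x * exp (y - x) := by rw [← exp_add, add_sub_cancel]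
  nlinarith [exp_pos x]

namespace Monotone

variable {f : ℝ → ℝ} (hf : Monotone f) {a b : ℝ}
include hf

theorem sub_mul_le_intervalIntegral (hab : a ≤ b) : (b - a) * f a ≤ ∫ x in a..b, f x := by
  simpa using integral_mono_on hab (intervalIntegrable_const (μ := volume)) hf.intervalIntegrable
    fun x hx => hf hx.1

theorem intervalIntegral_le_sub_mul (hab : a ≤ b) : ∫ x in a..b, f x ≤ (b - a) * f b := by
  simpa using integral_mono_on hab hf.intervalIntegrable (intervalIntegrable_const (μ := volume))
    fun x hx => hf hx.2

end Monotone

section FillingTime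

variable {xs : ℝ} (h : 0 ≤ xs) (u v : C(Icc (0:ℝ) xs, ℝ))

theorem continuous_exp_neg_comp_projIcc : Continuous fun z => exp (-(u (projIcc 0 xs h z))) := by
  fun_prop

theorem Fu_sub_Fu (a b : ℝ) :
    Fu xs h u b - Fu xs h u a = ∫ z in a..b, exp (-(u (projIcc 0 xs h z))) :=
  integral_interval_sub_left ((continuous_exp_neg_comp_projIcc h u).intervalIntegrable _ _)
    ((continuous_exp_neg_comp_projIcc h u).intervalIntegrable _ _)

theorem Fu_monotone : Monotone (Fu xs h u) := fun a b hab => by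
  have := integral_nonneg (μ := volume) hab fun z _ => (exp_pos (-(u (projIcc 0 xs h z)))).le
  linarith [Fu_sub_Fu h u a b]

theorem Fu_pos {x : ℝ} (hx : 0 < x) : 0 < Fu xs h u x :=
  intervalIntegral_pos_of_pos_on ((continuous_exp_neg_comp_projIcc h u).intervalIntegrable _ _)
    (fun _ _ => exp_pos _) hx

theorem Wu_sub_Wu (a b : ℝ) : Wu xs h u b - Wu xs h u a = ∫ ξ in a..b, Fu xs h u ξ :=
  integral_interval_sub_left (Fu_monotone h u).intervalIntegrable
    (Fu_monotone h u).intervalIntegrable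

theorem Wu_strictMonoOn : StrictMonoOn (Wu xs h u) (Ici 0) := fun a ha b _ hab => by
  have := intervalIntegral_pos_of_pos_on (Fu_monotone h u).intervalIntegrable
    (fun ξ hξ => Fu_pos h u (lt_of_le_of_lt (mem_Ici.1 ha) hξ.1)) hab
  linarith [Wu_sub_Wu h u a b]

theorem eq_of_Wu_eq_tau {y : ℝ} (hy : y ∈ Icc 0 xs) (hWy : Wu xs h u y = tau xs h u) : y = xs :=
  Wu_strictMonoOn h u |>.injOn hy.1 (mem_Ici.2 h) hWy

theorem Wu_mul_sub_le_mul_tau_sub_Wu {y : ℝ} (hy : y ∈ Icc 0 xs) :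
    Wu xs h u y * (xs - y) ≤ xs * (tau xs h u - Wu xs h u y) := by
  have hxy : 0 ≤ xs - y := sub_nonneg.2 hy.2
  have hFy : 0 ≤ Fu xs h u y := by simpa [Fu] using Fu_monotone h u hy.1
  have hW : Wu xs h u y ≤ y * Fu xs h u y := by
    simpa [Wu] using (Fu_monotone h u).intervalIntegral_le_sub_mul hy.1
  have hτ : (xs - y) * Fu xs h u y ≤ tau xs h u - Wu xs h u y := by
    rw [tau, Wu_sub_Wu]
    exact (Fu_monotone h u).sub_mul_le_intervalIntegral hy.2
  calc Wu xs h u y * (xs - y) ≤ y * Fu xs h u y * (xs - y) := by gcongr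
    _ ≤ xs * Fu xs h u y * (xs - y) := by gcongr; exact hy.2
    _ = xs * ((xs - y) * Fu xs h u y) := by ring
    _ ≤ xs * (tau xs h u - Wu xs h u y) := by gcongr

theorem exp_neg_sub_exp_neg_le (p : Icc (0:ℝ) xs) :
    exp (-u p) - exp (-v p) ≤ exp ‖u‖ * ‖u - v‖ := by
  have hu : -u p ≤ ‖u‖ := neg_le.1 (neg_le_of_abs_le (u.norm_coe_le_norm p))
  have huv : v p - u p ≤ ‖u - v‖ := by
    simpa [add_comm] using neg_le_of_abs_le ((u - v).norm_coe_le_norm p)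
  calc exp (-u p) - exp (-v p) ≤ exp (-u p) * (v p - u p) := by
        simpa [sub_eq_neg_add, add_comm] using exp_sub_exp_le_exp_mul_sub (-u p) (-v p)
    _ ≤ exp ‖u‖ * ‖u - v‖ := by
        rcases le_total (v p - u p) 0 with hneg | hpos
        · exact (mul_nonpos_of_nonneg_of_nonpos (exp_pos _).le hneg).trans (by positivity)
        · exact mul_le_mul (exp_le_exp.2 hu) huv hpos (exp_pos _).le

theorem Fu_sub_Fu_le {x : ℝ} (hx : 0 ≤ x) :
    Fu xs h u x - Fu xs h v x ≤ x * (exp ‖u‖ * ‖u - v‖) := by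
  rw [Fu, Fu, ← integral_sub ((continuous_exp_neg_comp_projIcc h u).intervalIntegrable _ _)
    ((continuous_exp_neg_comp_projIcc h v).intervalIntegrable _ _)]
  simpa [mul_left_comm] using integral_mono_on hx
    (((continuous_exp_neg_comp_projIcc h u).sub
      (continuous_exp_neg_comp_projIcc h v)).intervalIntegrable _ _)
    (intervalIntegrable_const (μ := volume))
    fun z _ => exp_neg_sub_exp_neg_le u v (projIcc 0 xs h z)

theorem tau_sub_tau_le : tau xs h u - tau xs h v ≤ xs ^ 2 / 2 * (exp ‖u‖ * ‖u - v‖) := by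
  rw [tau, tau, Wu, Wu, ← integral_sub (Fu_monotone h u).intervalIntegrable
    (Fu_monotone h v).intervalIntegrable]
  calc ∫ ξ in (0:ℝ)..xs, (Fu xs h u ξ - Fu xs h v ξ)
      ≤ ∫ ξ in (0:ℝ)..xs, ξ * (exp ‖u‖ * ‖u - v‖) :=
        integral_mono_on h
          ((Fu_monotone h u).intervalIntegrable.sub (Fu_monotone h v).intervalIntegrable)
          ((continuous_id.mul continuous_const).intervalIntegrable _ _)
          fun ξ hξ => Fu_sub_Fu_le h u v hξ.1
    _ = xs ^ 2 / 2 * (exp ‖u‖ * ‖u - v‖) := by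
        rw [intervalIntegral.integral_mul_const, integral_id]; ring

end FillingTime

theorem stmt_14_general (xs : ℝ) (hxs : 0 < xs) (t₁ : ℝ) (ht₁ : 0 < t₁)
    (u v : C(Icc (0:ℝ) xs, ℝ)) (Υu Υv : ℝ → ℝ)
    (hΥu : ∀ s ∈ Icc (0:ℝ) (tau xs hxs.le u), Υu s ∈ Icc 0 xs ∧ Wu xs hxs.le u (Υu s) = s)
    (hΥv : ∀ s ∈ Icc (0:ℝ) (tau xs hxs.le v), Υv s ∈ Icc 0 xs ∧ Wu xs hxs.le v (Υv s) = s)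
    (hτ₁ : t₁ ≤ tau xs hxs.le v)
    (t : ℝ) (ht : t ∈ Icc (tau xs hxs.le v) (tau xs hxs.le u)) :
    |Υu t - Υv (tau xs hxs.le v)| ≤
      xs / t₁ * Real.exp (2 * ‖u‖) *
        (1 / 2 * xs ^ 2 * Real.exp (max ‖u‖ ‖v‖) * ‖u - v‖) := by
  have hτv : 0 ≤ tau xs hxs.le v := ht₁.le.trans hτ₁
  obtain ⟨hyv, hWyv⟩ := hΥv _ ⟨hτv, le_rfl⟩
  rw [eq_of_Wu_eq_tau hxs.le v hyv hWyv]
  obtain ⟨hy, hWy⟩ := hΥu t ⟨hτv.trans ht.1, ht.2⟩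
  have hxy : 0 ≤ xs - Υu t := sub_nonneg.2 hy.2
  have hfront : t₁ * (xs - Υu t) ≤ xs * (tau xs hxs.le u - tau xs hxs.le v) := calc
    t₁ * (xs - Υu t) ≤ t * (xs - Υu t) := mul_le_mul_of_nonneg_right (hτ₁.trans ht.1) hxy
    _ ≤ xs * (tau xs hxs.le u - t) := by
      simpa only [hWy] using Wu_mul_sub_le_mul_tau_sub_Wu hxs.le u hy
    _ ≤ xs * (tau xs hxs.le u - tau xs hxs.le v) := by gcongr; exact ht.1
  have hτ := tau_sub_tau_le hxs.le u v
  have hexp : exp ‖u‖ ≤ exp (2 * ‖u‖) * exp (max ‖u‖ ‖v‖) := by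
    rw [← exp_add]; exact exp_le_exp.2 (by linarith [norm_nonneg u, le_max_left ‖u‖ ‖v‖])
  rw [abs_sub_comm, abs_of_nonneg hxy, div_mul_eq_mul_div, div_mul_eq_mul_div, le_div_iff₀ ht₁]
  calc (xs - Υu t) * t₁ ≤ xs * (xs ^ 2 / 2 * ‖u - v‖) * exp ‖u‖ := by
        linarith [mul_le_mul_of_nonneg_left hτ hxs.le]
    _ ≤ xs * (xs ^ 2 / 2 * ‖u - v‖) * (exp (2 * ‖u‖) * exp (max ‖u‖ ‖v‖)) := by gcongr
    _ = xs * exp (2 * ‖u‖) * (1 / 2 * xs ^ 2 * exp (max ‖u‖ ‖v‖) * ‖u - v‖) := by ring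

/-- if `t₁ ≤ τ*_v ≤ τ*_u` then for every `t ∈ [τ*_v, τ*_u]`,
`|Υ^u(t) - Υ^v(τ*_v)| ≤ A_u·(1/2)·(x*)²·M_{u,v}·‖u - v‖`. -/
theorem stmt_14 (xs : ℝ) (hxs : 0 < xs) (t₁ : ℝ) (ht₁ : 0 < t₁)
    (u v : C(Icc (0:ℝ) xs, ℝ)) (Υu Υv : ℝ → ℝ)
    (hΥu : ∀ s ∈ Icc (0:ℝ) (tau xs hxs.le u), Υu s ∈ Icc 0 xs ∧ Wu xs hxs.le u (Υu s) = s)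
    (hΥv : ∀ s ∈ Icc (0:ℝ) (tau xs hxs.le v), Υv s ∈ Icc 0 xs ∧ Wu xs hxs.le v (Υv s) = s)
    (hτ₁ : t₁ ≤ tau xs hxs.le v) (hττ : tau xs hxs.le v ≤ tau xs hxs.le u)
    (t : ℝ) (ht : t ∈ Icc (tau xs hxs.le v) (tau xs hxs.le u)) :
    |Υu t - Υv (tau xs hxs.le v)| ≤
      xs / t₁ * Real.exp (2 * ‖u‖) *
        (1 / 2 * xs ^ 2 * Real.exp (max ‖u‖ ‖v‖) * ‖u - v‖) :=
  stmt_14_general xs hxs t₁ ht₁ u v Υu Υv hΥu hΥv hτ₁ t ht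
end

section
/- (Lipschitz continuity of the clamped front forward map.) Fix x* > 0 and t₁ > 0, and let u, v : [0,x*] → ℝ be continuous with t₁ ≤ min(τ*_u, τ*_v). Then for every t ≥ t₁, |Υ^u(min(t, τ*_u)) − Υ^v(min(t, τ*_v))| ≤ ( C_{u,v} + (1/2)·(x*)²·M_{u,v}·max(A_u, A_v) )·‖u − v‖, where M_{u,v} = exp(max(‖u‖,‖v‖)), A_u = (x*/t₁)·exp(2‖u‖), and C_{u,v} = exp((x*)⁴·M_{u,v}⁶/t₁²)·(x*)⁵·M_{u,v}⁶/t₁². -/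
/-!
Write `a = Υ^u(min(t, τ*_u))`, `b = Υ^v(min(t, τ*_v))` and `M = exp(max(‖u‖, ‖v‖))`.
Since `exp` is `M`-Lipschitz where it is evaluated, `|W_u - W_v| ≤ (x*)²·M·‖u - v‖/2`
on `[0, x*]`; in particular `|τ*_u - τ*_v|` is that small, hence so is `|W_u(a) - W_u(b)|`
up to a factor 2, because `W_u(a) - W_u(b) = (min(t, τ*_u) - min(t, τ*_v)) + (W_v(b) - W_u(b))`.
As `F_u(ξ) ≥ ξ/M`, `W_u` grows at least quadratically, which turns this into
`|a - b|·(a + b) ≤ 2(x*)²M²‖u - v‖`; finally `a² ≥ 2t₁/M` because `W_u(a) ≥ t₁`.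
The resulting bound `|a - b| ≤ (x*)³M³‖u - v‖/t₁` is below the stated one.
-/

open Set

lemma Real.abs_exp_sub_exp_le {r s B : ℝ} (hr : r ≤ B) (hs : s ≤ B) :
    |Real.exp r - Real.exp s| ≤ Real.exp B * |r - s| := by
  wlog hsr : s ≤ r generalizing r s
  · rw [abs_sub_comm, abs_sub_comm r s]
    exact this hs hr (le_of_not_ge hsr)
  rw [abs_of_nonneg (sub_nonneg.2 (Real.exp_le_exp.2 hsr)), abs_of_nonneg (sub_nonneg.2 hsr)]
  have hmul : Real.exp s = Real.exp (s - r) * Real.exp r := by rw [← Real.exp_add]; ring_nf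
  nlinarith [Real.add_one_le_exp (s - r), Real.exp_le_exp.2 hr, Real.exp_pos r, Real.exp_pos B]

lemma integral_id_mul (p q c : ℝ) : ∫ ξ in p..q, ξ * c = (q ^ 2 - p ^ 2) / 2 * c := by
  rw [intervalIntegral.integral_mul_const, integral_id]

section FrontIntegrals

variable {xs : ℝ} {h : 0 ≤ xs} (u v : C(Icc (0:ℝ) xs, ℝ))

lemma continuous_exp_neg_projIcc : Continuous fun z ↦ Real.exp (-(u (projIcc 0 xs h z))) := by
  fun_prop

lemma continuous_Fu : Continuous (Fu xs h u) :=
  intervalIntegral.continuous_primitive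
    (fun _ _ ↦ (continuous_exp_neg_projIcc u).intervalIntegrable _ _) 0

lemma neg_apply_le_norm (y : Icc (0:ℝ) xs) : -u y ≤ ‖u‖ :=
  (neg_le_abs _).trans (by simpa only [Real.norm_eq_abs] using u.norm_coe_le_norm y)

lemma exp_neg_apply_le (z : ℝ) : Real.exp (-(u (projIcc 0 xs h z))) ≤ Real.exp ‖u‖ :=
  Real.exp_le_exp.2 (neg_apply_le_norm u _)

lemma exp_neg_norm_le (z : ℝ) : Real.exp (-‖u‖) ≤ Real.exp (-(u (projIcc 0 xs h z))) :=
  Real.exp_le_exp.2 (by simpa using neg_apply_le_norm (-u) (projIcc 0 xs h z))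

lemma abs_exp_neg_apply_sub_le (z : ℝ) :
    |Real.exp (-(u (projIcc 0 xs h z))) - Real.exp (-(v (projIcc 0 xs h z)))| ≤
      Real.exp (max ‖u‖ ‖v‖) * ‖u - v‖ := by
  set y := projIcc 0 xs h z
  calc _ ≤ Real.exp (max ‖u‖ ‖v‖) * |-u y - -v y| :=
        Real.abs_exp_sub_exp_le ((neg_apply_le_norm u y).trans (le_max_left _ _))
          ((neg_apply_le_norm v y).trans (le_max_right _ _))
    _ ≤ Real.exp (max ‖u‖ ‖v‖) * ‖u - v‖ := by
        gcongr
        rw [neg_sub_neg, abs_sub_comm, ← Real.norm_eq_abs]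
        exact (u - v).norm_coe_le_norm y

lemma Fu_le {x : ℝ} (hx : 0 ≤ x) : Fu xs h u x ≤ x * Real.exp ‖u‖ := by
  simpa [Fu] using intervalIntegral.integral_mono_on (μ := MeasureTheory.volume) hx
    ((continuous_exp_neg_projIcc u).intervalIntegrable 0 x) intervalIntegrable_const
    (fun z _ ↦ exp_neg_apply_le u z)

lemma le_Fu {x : ℝ} (hx : 0 ≤ x) : x * Real.exp (-‖u‖) ≤ Fu xs h u x := by
  simpa [Fu] using intervalIntegral.integral_mono_on (μ := MeasureTheory.volume) hx
    intervalIntegrable_const ((continuous_exp_neg_projIcc u).intervalIntegrable 0 x)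
    (fun z _ ↦ exp_neg_norm_le u z)

lemma abs_Fu_sub_Fu_le {x : ℝ} (hx : 0 ≤ x) :
    |Fu xs h u x - Fu xs h v x| ≤ x * (Real.exp (max ‖u‖ ‖v‖) * ‖u - v‖) := by
  rw [Fu, Fu,
    ← intervalIntegral.integral_sub ((continuous_exp_neg_projIcc u).intervalIntegrable _ _)
    ((continuous_exp_neg_projIcc v).intervalIntegrable _ _), ← Real.norm_eq_abs]
  refine (intervalIntegral.norm_integral_le_of_norm_le_const
    fun z _ ↦ abs_exp_neg_apply_sub_le u v z).trans_eq ?_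
  rw [sub_zero, abs_of_nonneg hx, mul_comm]

lemma Wu_le {x : ℝ} (hx : 0 ≤ x) : Wu xs h u x ≤ x ^ 2 / 2 * Real.exp ‖u‖ := by
  simpa [Wu, integral_id_mul] using
    intervalIntegral.integral_mono_on (μ := MeasureTheory.volume) hx
    ((continuous_Fu u).intervalIntegrable 0 x) ((continuous_mul_const _).intervalIntegrable _ _)
    (fun ξ hξ ↦ Fu_le u hξ.1)

lemma le_Wu_sub_Wu {p q : ℝ} (hp : 0 ≤ p) (hpq : p ≤ q) :
    (q ^ 2 - p ^ 2) / 2 * Real.exp (-‖u‖) ≤ Wu xs h u q - Wu xs h u p := by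
  rw [Wu, Wu, intervalIntegral.integral_interval_sub_left
    ((continuous_Fu u).intervalIntegrable 0 q) ((continuous_Fu u).intervalIntegrable 0 p),
    ← integral_id_mul]
  exact intervalIntegral.integral_mono_on hpq ((continuous_mul_const _).intervalIntegrable _ _)
    ((continuous_Fu u).intervalIntegrable p q) (fun ξ hξ ↦ le_Fu u (hp.trans hξ.1))

lemma abs_Wu_sub_Wu_le {x : ℝ} (hx : 0 ≤ x) :
    |Wu xs h u x - Wu xs h v x| ≤ x ^ 2 / 2 * (Real.exp (max ‖u‖ ‖v‖) * ‖u - v‖) := by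
  rw [Wu, Wu, ← intervalIntegral.integral_sub ((continuous_Fu u).intervalIntegrable _ _)
    ((continuous_Fu v).intervalIntegrable _ _), ← Real.norm_eq_abs]
  refine (intervalIntegral.norm_integral_le_of_norm_le hx
    (Filter.Eventually.of_forall fun ξ hξ ↦ abs_Fu_sub_Fu_le u v hξ.1.le)
    ((continuous_mul_const _).intervalIntegrable _ _)).trans_eq ?_
  rw [integral_id_mul]
  ring

lemma abs_sub_mul_add_le {a b : ℝ} (ha : 0 ≤ a) (hb : 0 ≤ b) :
    |a - b| * (a + b) ≤ 2 * Real.exp ‖u‖ * |Wu xs h u a - Wu xs h u b| := by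
  suffices |a ^ 2 - b ^ 2| / 2 * Real.exp (-‖u‖) ≤ |Wu xs h u a - Wu xs h u b| by
    rw [← abs_of_nonneg (add_nonneg ha hb), ← abs_mul,
      show (a - b) * (a + b) = a ^ 2 - b ^ 2 by ring]
    calc |a ^ 2 - b ^ 2| = 2 * Real.exp ‖u‖ * (|a ^ 2 - b ^ 2| / 2 * Real.exp (-‖u‖)) := by
          rw [Real.exp_neg]; field_simp
      _ ≤ _ := by gcongr
  rcases le_total b a with hba | hab
  · rw [abs_of_nonneg (sub_nonneg.2 (pow_le_pow_left₀ hb hba 2))]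
    exact (le_Wu_sub_Wu u hb hba).trans (le_abs_self _)
  · rw [abs_sub_comm, abs_sub_comm (Wu _ _ _ a),
      abs_of_nonneg (sub_nonneg.2 (pow_le_pow_left₀ ha hab 2))]
    exact (le_Wu_sub_Wu u ha hab).trans (le_abs_self _)

lemma abs_Wu_sub_Wu_le_of_eq_min {a b t : ℝ} (hb0 : 0 ≤ b) (hbxs : b ≤ xs)
    (hWa : Wu xs h u a = min t (tau xs h u)) (hWb : Wu xs h v b = min t (tau xs h v)) :
    |Wu xs h u a - Wu xs h u b| ≤ xs ^ 2 * (Real.exp (max ‖u‖ ‖v‖) * ‖u - v‖) := by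
  set K := Real.exp (max ‖u‖ ‖v‖) * ‖u - v‖
  have htimes : |min t (tau xs h u) - min t (tau xs h v)| ≤ xs ^ 2 / 2 * K :=
    calc _ ≤ max |t - t| |tau xs h u - tau xs h v| := abs_min_sub_min_le_max _ _ _ _
      _ = |tau xs h u - tau xs h v| := by simp
      _ ≤ xs ^ 2 / 2 * K := abs_Wu_sub_Wu_le u v h
  have hfield : |Wu xs h v b - Wu xs h u b| ≤ xs ^ 2 / 2 * K := by
    rw [abs_sub_comm]
    refine (abs_Wu_sub_Wu_le u v hb0).trans ?_
    gcongr
  calc |Wu xs h u a - Wu xs h u b|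
      = |(min t (tau xs h u) - min t (tau xs h v)) + (Wu xs h v b - Wu xs h u b)| := by
        rw [hWa, hWb]; ring_nf
    _ ≤ xs ^ 2 / 2 * K + xs ^ 2 / 2 * K := (abs_add_le _ _).trans (add_le_add htimes hfield)
    _ = xs ^ 2 * K := by ring

end FrontIntegrals

lemma abs_sub_le_of_mul_add_le {a b x t M D : ℝ} (ha0 : 0 ≤ a) (hax : a ≤ x) (hb0 : 0 ≤ b)
    (ht : 0 < t) (hM : 1 ≤ M) (hD : 0 ≤ D) (hfront : 2 * t ≤ a ^ 2 * M)
    (hspread : |a - b| * (a + b) ≤ 2 * M * (x ^ 2 * (M * D))) :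
    |a - b| ≤ x ^ 5 * M ^ 6 / t ^ 2 * D := by
  have hx : 0 ≤ x := ha0.trans hax
  have hc := abs_nonneg (a - b)
  have hca : |a - b| * a ≤ 2 * x ^ 2 * M ^ 2 * D := by nlinarith
  have hca2 : |a - b| * a ^ 2 ≤ 2 * x ^ 3 * M ^ 2 * D := by
    nlinarith [mul_le_mul_of_nonneg_right hca ha0,
      mul_le_mul_of_nonneg_left hax (by positivity : 0 ≤ 2 * x ^ 2 * M ^ 2 * D)]
  have hct : |a - b| * t ≤ x ^ 3 * M ^ 3 * D := by
    nlinarith [mul_le_mul_of_nonneg_left hfront hc,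
      mul_le_mul_of_nonneg_right hca2 (zero_le_one.trans hM)]
  have htM : t ≤ x ^ 2 * M ^ 3 := by
    nlinarith [pow_le_pow_left₀ ha0 hax 2, pow_le_pow_right₀ hM (by norm_num : 1 ≤ 3)]
  rw [div_mul_eq_mul_div, le_div_iff₀ (by positivity)]
  nlinarith [mul_le_mul_of_nonneg_right hct ht.le,
    mul_le_mul_of_nonneg_left htM (by positivity : 0 ≤ x ^ 3 * M ^ 3 * D)]

/-- Lipschitz continuity of the clamped front forward map:
if `t₁ ≤ min(τ*_u, τ*_v)` then for every `t ≥ t₁`,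
`|Υ^u(min(t,τ*_u)) - Υ^v(min(t,τ*_v))| ≤ (C_{u,v} + (1/2)·(x*)²·M_{u,v}·max(A_u,A_v))·‖u-v‖`. -/
theorem stmt_19 (xs : ℝ) (hxs : 0 < xs) (t₁ : ℝ) (ht₁ : 0 < t₁)
    (u v : C(Icc (0:ℝ) xs, ℝ)) (Υu Υv : ℝ → ℝ)
    (hΥu : ∀ s ∈ Icc (0:ℝ) (tau xs hxs.le u), Υu s ∈ Icc 0 xs ∧ Wu xs hxs.le u (Υu s) = s)
    (hΥv : ∀ s ∈ Icc (0:ℝ) (tau xs hxs.le v), Υv s ∈ Icc 0 xs ∧ Wu xs hxs.le v (Υv s) = s)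
    (ht₁τ : t₁ ≤ min (tau xs hxs.le u) (tau xs hxs.le v))
    (t : ℝ) (ht : t₁ ≤ t) :
    |Υu (min t (tau xs hxs.le u)) - Υv (min t (tau xs hxs.le v))| ≤
      (Real.exp (xs ^ 4 * Real.exp (max ‖u‖ ‖v‖) ^ 6 / t₁ ^ 2) *
          (xs ^ 5 * Real.exp (max ‖u‖ ‖v‖) ^ 6 / t₁ ^ 2) +
        1 / 2 * xs ^ 2 * Real.exp (max ‖u‖ ‖v‖) *
          max (xs / t₁ * Real.exp (2 * ‖u‖)) (xs / t₁ * Real.exp (2 * ‖v‖))) *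
        ‖u - v‖ := by
  set M := Real.exp (max ‖u‖ ‖v‖)
  obtain ⟨hτu, hτv⟩ := le_min_iff.1 ht₁τ
  obtain ⟨⟨ha0, haxs⟩, hWa⟩ :=
    hΥu (min t (tau xs hxs.le u)) ⟨(ht₁.trans_le (le_min ht hτu)).le, min_le_right _ _⟩
  obtain ⟨⟨hb0, hbxs⟩, hWb⟩ :=
    hΥv (min t (tau xs hxs.le v)) ⟨(ht₁.trans_le (le_min ht hτv)).le, min_le_right _ _⟩
  have hMu : Real.exp ‖u‖ ≤ M := Real.exp_le_exp.2 (le_max_left _ _)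
  have hM : 1 ≤ M := Real.one_le_exp ((norm_nonneg u).trans (le_max_left _ _))
  have hspread := (abs_sub_mul_add_le u ha0 hb0).trans
    (mul_le_mul (by gcongr : 2 * Real.exp ‖u‖ ≤ 2 * M)
      (abs_Wu_sub_Wu_le_of_eq_min u v hb0 hbxs hWa hWb) (abs_nonneg _) (by positivity))
  have hfront : 2 * t₁ ≤ Υu (min t (tau xs hxs.le u)) ^ 2 * M := by
    have := (le_min ht hτu).trans (hWa ▸ Wu_le u ha0)
    nlinarith
  calc _ ≤ xs ^ 5 * M ^ 6 / t₁ ^ 2 * ‖u - v‖ :=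
        abs_sub_le_of_mul_add_le ha0 haxs hb0 ht₁ hM (norm_nonneg _) hfront hspread
    _ ≤ Real.exp (xs ^ 4 * M ^ 6 / t₁ ^ 2) * (xs ^ 5 * M ^ 6 / t₁ ^ 2) * ‖u - v‖ := by
        gcongr
        exact le_mul_of_one_le_left (by positivity) (Real.one_le_exp (by positivity))
    _ ≤ _ := by
        gcongr
        exact le_add_of_nonneg_right (by positivity)
end
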